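/- arXiv:2203.09117 — 2 statements merged into one kernel-verified Lean document; each statement's English description precedes it below -/
import Mathlib

section
/- Let f : 𝕋 → GLₙ(ℂ) be a continuous map taking values in Hermitian invertible matrices and admitting a canonical factorization f = f₋ f₊. Then the canonical extension fᵉ(z) = f₋ᵉ(z̄⁻¹) f₊ᵉ(z) to the closed unit disk also takes values in Hermitian invertible matrices. -/
/-!
On the unit circle, Hermitian symmetry of `f(z̄) = Fm(z) Fp(z̄)` says exactly that the transition
matrix `T(w) = Fm(w)⁻¹ Fp(w̄)ᴴ` is Hermitian. Each entry of `T` is holomorphic in `w`, and on the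
circle it is the conjugate of another holomorphic function (the transposed entry). Such a function
is constant: in its generalized mean value formula the conjugated Cauchy kernel is again
holomorphic, so the integral collapses to a value at the center. Hence `T ≡ B` with `B` Hermitian,
i.e. `Fp(z) = B Fm(z̄)ᴴ`, and `Fm(z̄) Fp(z) = Fm(z̄) B Fm(z̄)ᴴ` is Hermitian.
-/

open Metric

/-- A canonical (right) factorization `f = f₋ f₊` of a nonsingular matrix function on the
unit circle.  The factor `f₊` extends continuously and invertibly to the closed unit disk,
analytically on the open disk; the factor `f₋` extends continuously and invertibly to the
closed exterior disk including `∞`.  We encode the exterior extension `f₋ᵉ` via the map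
`Fm : 𝔻² → GLₙ(ℂ)`, `Fm w = f₋ᵉ(w⁻¹)` (so `Fm 0 = f₋ᵉ(∞)`), which is continuous on the
closed unit disk, analytic on the open disk, and invertible-valued. -/
structure CanonicalFactorization (n : ℕ) (f : ℂ → Matrix (Fin n) (Fin n) ℂ) : Type where
  Fm : ℂ → Matrix (Fin n) (Fin n) ℂ
  Fp : ℂ → Matrix (Fin n) (Fin n) ℂ
  contOn_m : ContinuousOn Fm (closedBall 0 1)
  contOn_p : ContinuousOn Fp (closedBall 0 1)
  anal_m : ∀ i j, DifferentiableOn ℂ (fun z => Fm z i j) (ball 0 1)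
  anal_p : ∀ i j, DifferentiableOn ℂ (fun z => Fp z i j) (ball 0 1)
  unit_m : ∀ z ∈ closedBall (0 : ℂ) 1, IsUnit (Fm z)
  unit_p : ∀ z ∈ closedBall (0 : ℂ) 1, IsUnit (Fp z)
  factor : ∀ z ∈ sphere (0 : ℂ) 1, f z = Fm z⁻¹ * Fp z

open Set Matrix ComplexConjugate

theorem Real.circleAverage_conj (f : ℂ → ℂ) (c : ℂ) (R : ℝ) :
    circleAverage (fun z => conj (f z)) c R = conj (circleAverage f c R) := by
  simp only [circleAverage_def, intervalIntegral.intervalIntegral_conj, Complex.real_smul,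
    map_mul, Complex.conj_ofReal]

theorem Complex.conj_sub_eq_div_of_mem_sphere {z c : ℂ} {R : ℝ} (hz : z ∈ sphere c R) :
    conj (z - c) = R ^ 2 / (z - c) := by
  rcases eq_or_ne z c with rfl | hne
  · simp
  rw [mem_sphere, dist_eq_norm] at hz
  rw [eq_div_iff (sub_ne_zero.mpr hne), mul_comm, Complex.mul_conj', hz]

namespace DiffContOnCl

theorem eq_conj_center_of_eqOn_sphere_conj {g χ : ℂ → ℂ} {c w : ℂ} {R : ℝ}
    (hg : DiffContOnCl ℂ g (ball c R)) (hχ : DiffContOnCl ℂ χ (ball c R))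
    (h : EqOn g (conj ∘ χ) (sphere c R)) (hw : w ∈ ball c R) : g w = conj (χ c) := by
  have hR : |R| = R := abs_of_pos (pos_of_mem_ball hw)
  -- On the sphere `conj (K z) = (z - c) / (z - w)`, the kernel of the mean value formula at `w`.
  set K : ℂ → ℂ := fun z => R ^ 2 / (R ^ 2 - conj (w - c) * (z - c))
  have hK : DifferentiableOn ℂ K (closedBall c R) := by
    refine (differentiableOn_const _).div (by fun_prop) fun z hz => ?_
    have hlt : ‖conj (w - c) * (z - c)‖ < R ^ 2 := by
      rw [norm_mul, Complex.norm_conj, ← dist_eq_norm, ← dist_eq_norm]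
      nlinarith [mem_ball.mp hw, mem_closedBall.mp hz, dist_nonneg (x := w) (y := c)]
    intro h0
    rw [sub_eq_zero] at h0
    rw [← h0] at hlt
    simp at hlt
  have hKχ : DiffContOnCl ℂ (fun z => K z • χ z) (ball c |R|) := by
    rw [hR]
    exact (hK.diffContOnCl_ball subset_rfl).smul hχ
  have hkernel : EqOn (fun z => ((z - c) / (z - w)) • g z) (fun z => conj (K z • χ z))
      (sphere c |R|) := by
    intro z hz
    rw [hR] at hz
    have hzw : z - w ≠ 0 := sub_ne_zero.mpr fun hzw => by
      rw [hzw, mem_sphere] at hz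
      exact (mem_ball.mp hw).ne hz
    have hzc : z - c ≠ 0 := sub_ne_zero.mpr (ne_of_mem_sphere hz (pos_of_mem_ball hw).ne')
    have hR0 : (R : ℂ) ≠ 0 := Complex.ofReal_ne_zero.mpr (pos_of_mem_ball hw).ne'
    simp only [K, h hz, Function.comp_apply, smul_eq_mul, map_mul, map_div₀, map_sub, map_pow,
      Complex.conj_conj, Complex.conj_ofReal, Complex.conj_sub_eq_div_of_mem_sphere hz]
    congr 1
    field_simp
    rw [sub_sub_sub_cancel_right, div_self hzw]
  calc g w = Real.circleAverage (fun z => ((z - c) / (z - w)) • g z) c R :=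
        (circleAverage_smul_div (by rwa [hR]) (by rwa [hR])).symm
    _ = conj (Real.circleAverage (fun z => K z • χ z) c R) := by
        rw [Real.circleAverage_congr_sphere hkernel, Real.circleAverage_conj]
    _ = conj (χ c) := by
        rw [hKχ.circleAverage]
        simp [K, (pos_of_mem_ball hw).ne']

theorem eqOn_closedBall_of_eqOn_sphere_conj {g χ : ℂ → ℂ} {c : ℂ} {R : ℝ}
    (hg : DiffContOnCl ℂ g (ball c R)) (hχ : DiffContOnCl ℂ χ (ball c R))
    (h : EqOn g (conj ∘ χ) (sphere c R)) : EqOn g (fun _ => conj (χ c)) (closedBall c R) := by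
  rcases le_or_gt R 0 with hR | hR
  · intro z hz
    obtain rfl : z = c := dist_le_zero.mp ((mem_closedBall.mp hz).trans hR)
    exact h (by simpa using (le_antisymm hR (by simpa using hz)).symm)
  · exact EqOn.of_subset_closure (fun w hw => hg.eq_conj_center_of_eqOn_sphere_conj hχ h hw)
      hg.continuousOn_ball continuousOn_const ball_subset_closedBall (closure_ball c hR.ne').ge

end DiffContOnCl

theorem Matrix.isHermitian_mul_iff_isHermitian_inv_mul_conjTranspose {n α : Type*} [Fintype n]
    [DecidableEq n] [CommRing α] [StarRing α] {M P : Matrix n n α} (hM : IsUnit M) :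
    (M * P).IsHermitian ↔ (M⁻¹ * Pᴴ).IsHermitian := by
  have hdet : IsUnit M.det := (isUnit_iff_isUnit_det M).mp hM
  have h₁ : M⁻¹ * (M * P)ᴴ * M⁻¹ᴴ = M⁻¹ * Pᴴ := by
    rw [conjTranspose_mul, Matrix.mul_assoc, Matrix.mul_assoc, ← conjTranspose_mul,
      M.nonsing_inv_mul hdet, conjTranspose_one, Matrix.mul_one]
  have h₂ : M * (M⁻¹ * Pᴴ)ᴴ * Mᴴ = M * P := by
    rw [conjTranspose_mul, conjTranspose_conjTranspose, Matrix.mul_assoc, Matrix.mul_assoc,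
      ← conjTranspose_mul, M.mul_nonsing_inv hdet, conjTranspose_one, Matrix.mul_one]
  constructor
  · intro h
    rw [← h₁]
    exact isHermitian_mul_mul_conjTranspose _ h.conjTranspose
  · intro h
    rw [← h₂]
    exact isHermitian_mul_mul_conjTranspose _ h.conjTranspose

theorem ContinuousOn.matrix_inv {X K n : Type*} [TopologicalSpace X] [Field K] [TopologicalSpace K]
    [IsTopologicalDivisionRing K] [Fintype n] [DecidableEq n] {A : X → Matrix n n K} {s : Set X}
    (hA : ContinuousOn A s) (hu : ∀ x ∈ s, IsUnit (A x)) : ContinuousOn (fun x => (A x)⁻¹) s := by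
  refine fun x hx => ContinuousAt.comp_continuousWithinAt ?_ (hA x hx)
  refine continuousAt_matrix_inv _ ?_
  rw [Ring.inverse_eq_inv']
  exact continuousAt_inv₀ ((isUnit_iff_isUnit_det _).mp (hu x hx)).ne_zero

section

variable {𝕜 : Type*} [NontriviallyNormedField 𝕜] {E : Type*} [NormedAddCommGroup E]
  [NormedSpace 𝕜 E] {l m n : Type*}

variable (𝕜) in
def EntrywiseDifferentiableOn (A : E → Matrix m n 𝕜) (s : Set E) : Prop :=
  ∀ i j, DifferentiableOn 𝕜 (fun x => A x i j) s

variable {s : Set E}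

namespace EntrywiseDifferentiableOn

theorem mono {A : E → Matrix m n 𝕜} {t : Set E} (hA : EntrywiseDifferentiableOn 𝕜 A s)
    (hts : t ⊆ s) : EntrywiseDifferentiableOn 𝕜 A t := fun i j => (hA i j).mono hts

theorem mul [Fintype m] {A : E → Matrix l m 𝕜} {B : E → Matrix m n 𝕜}
    (hA : EntrywiseDifferentiableOn 𝕜 A s) (hB : EntrywiseDifferentiableOn 𝕜 B s) :
    EntrywiseDifferentiableOn 𝕜 (fun x => A x * B x) s := fun i j => by
  simp only [mul_apply]
  exact DifferentiableOn.fun_sum fun k _ => (hA i k).mul (hB k j)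

theorem det [Fintype n] [DecidableEq n] {A : E → Matrix n n 𝕜}
    (hA : EntrywiseDifferentiableOn 𝕜 A s) : DifferentiableOn 𝕜 (fun x => (A x).det) s := by
  simp only [det_apply']
  refine DifferentiableOn.fun_sum fun σ _ => DifferentiableOn.const_mul ?_ _
  rw [← Finset.prod_fn]
  exact Finset.prod_induction _ (DifferentiableOn 𝕜 · s) (fun _ _ => .mul)
    (differentiableOn_const 1) fun i _ => hA (σ i) i

theorem adjugate [Fintype n] [DecidableEq n] {A : E → Matrix n n 𝕜}
    (hA : EntrywiseDifferentiableOn 𝕜 A s) :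
    EntrywiseDifferentiableOn 𝕜 (fun x => (A x).adjugate) s := fun i j => by
  simp only [adjugate_apply]
  refine det fun a b => ?_
  by_cases hab : a = j
  · simpa only [updateRow_apply, hab, if_true] using differentiableOn_const _
  · simpa only [updateRow_apply, hab, if_false] using hA a b

theorem inv [Fintype n] [DecidableEq n] {A : E → Matrix n n 𝕜}
    (hA : EntrywiseDifferentiableOn 𝕜 A s) (hu : ∀ x ∈ s, IsUnit (A x)) :
    EntrywiseDifferentiableOn 𝕜 (fun x => (A x)⁻¹) s := fun i j => by
  simp only [inv_def, Ring.inverse_eq_inv', Matrix.smul_apply, smul_eq_mul]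
  exact (hA.det.inv fun x hx => ((isUnit_iff_isUnit_det _).mp (hu x hx)).ne_zero).mul
    (hA.adjugate i j)

theorem conjTranspose_comp_conj [StarRing 𝕜] [NormedStarGroup 𝕜] {s : Set 𝕜}
    {A : 𝕜 → Matrix m n 𝕜} (hA : EntrywiseDifferentiableOn 𝕜 A s) (hs : IsOpen s) :
    EntrywiseDifferentiableOn 𝕜 (fun z => (A (conj z))ᴴ) (conj ⁻¹' s) := fun i j _ hz =>
  (differentiableAt_conj_conj_iff.mpr
    ((hA j i).differentiableAt (hs.mem_nhds hz))).differentiableWithinAt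

end EntrywiseDifferentiableOn

end

theorem Matrix.eqOn_closedBall_of_isHermitian_sphere {n : Type*} {Φ : ℂ → Matrix n n ℂ}
    {c : ℂ} {R : ℝ} (hd : EntrywiseDifferentiableOn ℂ Φ (ball c R))
    (hc : ContinuousOn Φ (closedBall c R)) (hherm : ∀ z ∈ sphere c R, (Φ z).IsHermitian) :
    EqOn Φ (fun _ => (Φ c)ᴴ) (closedBall c R) := fun z hz => by
  have hentry (i j : n) : DiffContOnCl ℂ (fun z => Φ z i j) (ball c R) :=
    .mk_ball (hd i j) ((continuous_apply_apply i j).comp_continuousOn hc)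
  ext i j
  exact DiffContOnCl.eqOn_closedBall_of_eqOn_sphere_conj (hentry i j) (hentry j i)
    (fun w hw => ((hherm w hw).apply i j).symm) hz

namespace CanonicalFactorization

variable {n : ℕ} {f : ℂ → Matrix (Fin n) (Fin n) ℂ} (c : CanonicalFactorization n f)

/-- For Hermitian `f` this relates the canonical factorizations `f = f₋ f₊` and
`f = f₊ᴴ f₋ᴴ`: it is the constant matrix by which they differ. -/
noncomputable def transition (w : ℂ) : Matrix (Fin n) (Fin n) ℂ :=
  (c.Fm w)⁻¹ * (c.Fp (conj w))ᴴ

theorem entrywiseDifferentiableOn_transition :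
    EntrywiseDifferentiableOn ℂ c.transition (ball 0 1) :=
  (EntrywiseDifferentiableOn.inv c.anal_m fun w hw => c.unit_m w (ball_subset_closedBall hw)).mul
    ((EntrywiseDifferentiableOn.conjTranspose_comp_conj c.anal_p isOpen_ball).mono
      fun z hz => by simpa using hz)

theorem continuousOn_transition : ContinuousOn c.transition (closedBall 0 1) :=
  (c.contOn_m.matrix_inv c.unit_m).mul (continuous_id.matrix_conjTranspose.comp_continuousOn
    (c.contOn_p.comp Complex.continuous_conj.continuousOn fun z hz => by simpa using hz))

theorem isHermitian_transition (hherm : ∀ z ∈ sphere (0 : ℂ) 1, (f z)ᴴ = f z) {w : ℂ}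
    (hw : w ∈ sphere (0 : ℂ) 1) : (c.transition w).IsHermitian := by
  have hw' : conj w ∈ sphere (0 : ℂ) 1 := by simpa using hw
  have hinv : (conj w)⁻¹ = w := by
    rw [Complex.inv_eq_conj (by simpa using hw'), Complex.conj_conj]
  have hf := hherm _ hw'
  rw [c.factor _ hw', hinv] at hf
  exact (isHermitian_mul_iff_isHermitian_inv_mul_conjTranspose
    (c.unit_m w (sphere_subset_closedBall hw))).mp hf

end CanonicalFactorization

open Matrix in
/-- If `f : 𝕋 → GLₙ(ℂ)` takes values in Hermitian invertible matrices and admits a canonical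
factorization `f = f₋ f₊`, then the canonical extension `fᵉ(z) = f₋ᵉ(z̄⁻¹) f₊ᵉ(z)` to the
closed unit disk also takes values in Hermitian invertible matrices. -/
theorem extension_hermitian {n : ℕ} (f : ℂ → Matrix (Fin n) (Fin n) ℂ)
    (c : CanonicalFactorization n f)
    (hherm : ∀ z ∈ sphere (0 : ℂ) 1, (f z)ᴴ = f z) :
    ∀ z ∈ closedBall (0 : ℂ) 1,
      (c.Fm (starRingEnd ℂ z) * c.Fp z)ᴴ = c.Fm (starRingEnd ℂ z) * c.Fp z ∧
      IsUnit (c.Fm (starRingEnd ℂ z) * c.Fp z) := by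
  have hconst := eqOn_closedBall_of_isHermitian_sphere c.entrywiseDifferentiableOn_transition
    c.continuousOn_transition fun w hw => c.isHermitian_transition hherm hw
  intro z hz
  have hz' : conj z ∈ closedBall (0 : ℂ) 1 := by simpa using hz
  have hB : (c.transition (conj z)).IsHermitian := by
    rw [IsHermitian, hconst hz', conjTranspose_conjTranspose]
    exact hconst (mem_closedBall_self zero_le_one)
  refine ⟨(isHermitian_mul_iff_isHermitian_inv_mul_conjTranspose (c.unit_m _ hz')).mpr ?_,
    (c.unit_m _ hz').mul (c.unit_p z hz)⟩
  simpa only [CanonicalFactorization.transition, Complex.conj_conj] using hB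
end

section
/- Let 𝒞 be an antiunitary operator on ℂⁿ with 𝒞² = ±1, and let f : 𝕋 → GLₙ(ℂ) satisfy f(z) = 𝒞 f(z̄) 𝒞* for all z ∈ 𝕋 and admit a canonical factorization. Then the canonical extension fᵉ : 𝔻² → GLₙ(ℂ) satisfies fᵉ(z) = 𝒞 fᵉ(z̄) 𝒞* for all z ∈ 𝔻². -/
/-!
On the circle `z̄ = z⁻¹`, so the equivariance of `f` turns `w ↦ Ad_𝒞 (f₋ᵉ(w̄))`,
`z ↦ Ad_𝒞 (f₊ᵉ(z̄))` into a second canonical factorization of `f`; reflecting both the variable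
and the values preserves holomorphy. Canonical factorizations are unique up to a constant:
if `M₁(z̄) P₁(z) = M₂(z̄) P₂(z)` on the circle, then `P₂ P₁⁻¹`, holomorphic in `z`, agrees there
with `M₂⁻¹ M₁`, holomorphic in `z̄`. Adding to one of them the reflection of the other, and
subtracting, gives holomorphic functions with real boundary values, which are constant by the
maximum principle and the open mapping theorem. So the two extensions agree on the disc.
-/

open Metric

open Set Complex ComplexConjugate Bornology

section

variable {U : Set ℂ} {p : ℂ → ℂ}

theorem DiffContOnCl.im_nonneg_of_frontier (hU : IsBounded U) (hp : DiffContOnCl ℂ p U)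
    (h : ∀ z ∈ frontier U, 0 ≤ (p z).im) {z : ℂ} (hz : z ∈ closure U) : 0 ≤ (p z).im := by
  have hexp : DiffContOnCl ℂ (fun w => cexp (I * p w)) U :=
    (by fun_prop : Differentiable ℂ fun w => cexp (I * w)).comp_diffContOnCl hp
  have hle := Complex.norm_le_of_forall_mem_frontier_norm_le hU hexp (C := 1)
    (fun w hw => by simpa [norm_exp, I_mul_re] using h w hw) hz
  simpa [norm_exp, I_mul_re] using hle

theorem DiffContOnCl.im_eq_zero_of_frontier (hU : IsBounded U) (hp : DiffContOnCl ℂ p U)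
    (h : ∀ z ∈ frontier U, (p z).im = 0) {z : ℂ} (hz : z ∈ closure U) : (p z).im = 0 := by
  have h₁ := hp.im_nonneg_of_frontier hU (fun w hw => (h w hw).ge) hz
  have h₂ := hp.neg.im_nonneg_of_frontier hU (fun w hw => by simp [h w hw]) hz
  simp only [Pi.neg_apply, neg_im, Left.nonneg_neg_iff] at h₂
  exact le_antisymm h₂ h₁

theorem DifferentiableOn.eq_of_im_eq_zero (hUo : IsOpen U) (hUc : IsPreconnected U)
    (hp : DifferentiableOn ℂ p U) (h : ∀ z ∈ U, (p z).im = 0) {z₀ : ℂ} (hz₀ : z₀ ∈ U) :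
    EqOn p (fun _ => p z₀) U := by
  rcases (hp.analyticOnNhd hUo).is_constant_or_isOpen hUc with ⟨c, hc⟩ | hopen
  · intro z hz; rw [hc z hz, hc z₀ hz₀]
  · have hsub : p '' U ⊆ interior (im ⁻¹' {0}) :=
      interior_maximal (by rintro _ ⟨z, hz, rfl⟩; exact h z hz) (hopen U subset_rfl hUo)
    rw [interior_preimage_im, interior_singleton, preimage_empty] at hsub
    exact absurd (hsub ⟨z₀, hz₀, rfl⟩) (notMem_empty _)

theorem DiffContOnCl.eq_of_im_eq_zero_of_frontier (hUo : IsOpen U) (hUb : IsBounded U)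
    (hUc : IsPreconnected U) (hp : DiffContOnCl ℂ p U) (h : ∀ z ∈ frontier U, (p z).im = 0)
    {z₀ : ℂ} (hz₀ : z₀ ∈ U) : EqOn p (fun _ => p z₀) (closure U) :=
  EqOn.of_subset_closure
    (hp.differentiableOn.eq_of_im_eq_zero hUo hUc
      (fun _ hz => hp.im_eq_zero_of_frontier hUb h (subset_closure hz)) hz₀)
    hp.continuousOn continuousOn_const subset_closure subset_rfl

theorem DiffContOnCl.conj_conj (hp : DiffContOnCl ℂ p U) (hUo : IsOpen U)
    (hU : MapsTo conj U U) : DiffContOnCl ℂ (conj ∘ p ∘ conj) U := by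
  refine ⟨fun z hz => ?_, ?_⟩
  · have := (hp.differentiableAt hUo (hU hz)).conj_conj
    rw [Complex.conj_conj] at this
    exact this.differentiableWithinAt
  · exact continuous_conj.comp_continuousOn
      (hp.continuousOn.comp continuous_conj.continuousOn (hU.closure continuous_conj))

end

theorem mapsTo_conj_ball_zero (r : ℝ) : MapsTo conj (ball (0 : ℂ) r) (ball 0 r) :=
  fun _ hz => by simpa using hz

/-- `u + v'` and `I * (u - v')`, where `v' z = conj (v z̄)`, are holomorphic and real on the
circle. -/
theorem eq_of_eq_comp_conj_on_sphere {u v : ℂ → ℂ} (hu : DiffContOnCl ℂ u (ball 0 1))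
    (hv : DiffContOnCl ℂ v (ball 0 1)) (h : ∀ z ∈ sphere (0 : ℂ) 1, u z = v (conj z))
    {z w : ℂ} (hz : z ∈ closedBall (0 : ℂ) 1) (hw : w ∈ closedBall (0 : ℂ) 1) : u z = v w := by
  have hcl : closure (ball (0 : ℂ) 1) = closedBall 0 1 := closure_ball 0 one_ne_zero
  have hfr : frontier (ball (0 : ℂ) 1) = sphere 0 1 := frontier_ball 0 one_ne_zero
  set v' := conj ∘ v ∘ conj with hv'
  have hv'd : DiffContOnCl ℂ v' (ball 0 1) :=
    hv.conj_conj isOpen_ball (mapsTo_conj_ball_zero 1)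
  have hv'u : ∀ ζ ∈ sphere (0 : ℂ) 1, v' ζ = conj (u ζ) := fun ζ hζ => by simp [hv', h ζ hζ]
  have hsum := (hu.add hv'd).eq_of_im_eq_zero_of_frontier isOpen_ball isBounded_ball
    (convex_ball 0 1).isPreconnected (by rw [hfr]; intro ζ hζ; simp [hv'u ζ hζ])
    (mem_ball_self one_pos)
  have hdiff := ((hu.sub hv'd).const_smul I).eq_of_im_eq_zero_of_frontier isOpen_ball
    isBounded_ball (convex_ball 0 1).isPreconnected
    (by rw [hfr]; intro ζ hζ; simp [hv'u ζ hζ]) (mem_ball_self one_pos)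
  rw [hcl] at hsum hdiff
  have hconst : ∀ ζ ∈ closedBall (0 : ℂ) 1, u ζ = u 0 ∧ v' ζ = v' 0 := fun ζ hζ => by
    have h₁ : u ζ + v' ζ = u 0 + v' 0 := hsum hζ
    have h₂ : u ζ - v' ζ = u 0 - v' 0 := mul_left_cancel₀ I_ne_zero (hdiff hζ)
    exact ⟨by linear_combination (h₁ + h₂) / 2, by linear_combination (h₁ - h₂) / 2⟩
  have h1 : (1 : ℂ) ∈ closedBall (0 : ℂ) 1 := by simp
  have hw' : conj w ∈ closedBall (0 : ℂ) 1 := by simpa using hw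
  calc u z = u 1 := by rw [(hconst z hz).1, (hconst 1 h1).1]
    _ = v 1 := by simpa using h 1 (by simp)
    _ = v w := by
      have := congrArg conj ((hconst 1 h1).2.trans (hconst (conj w) hw').2.symm)
      simpa [hv'] using this

section

variable {𝕜 : Type*} [NontriviallyNormedField 𝕜] {s : Set 𝕜}

theorem DiffContOnCl.mul {f g : 𝕜 → 𝕜} (hf : DiffContOnCl 𝕜 f s) (hg : DiffContOnCl 𝕜 g s) :
    DiffContOnCl 𝕜 (fun z => f z * g z) s :=
  ⟨hf.1.mul hg.1, hf.2.mul hg.2⟩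

theorem DiffContOnCl.sum {ι : Type*} {t : Finset ι} {f : ι → 𝕜 → 𝕜}
    (hf : ∀ i ∈ t, DiffContOnCl 𝕜 (f i) s) : DiffContOnCl 𝕜 (fun z => ∑ i ∈ t, f i z) s :=
  ⟨DifferentiableOn.fun_sum fun i hi => (hf i hi).1,
    continuousOn_finsetSum _ fun i hi => (hf i hi).2⟩

theorem DiffContOnCl.prod {ι : Type*} {t : Finset ι} {f : ι → 𝕜 → 𝕜}
    (hf : ∀ i ∈ t, DiffContOnCl 𝕜 (f i) s) : DiffContOnCl 𝕜 (fun z => ∏ i ∈ t, f i z) s :=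
  ⟨DifferentiableOn.fun_finsetProd fun i hi => (hf i hi).1,
    continuousOn_finsetProd _ fun i hi => (hf i hi).2⟩

variable (𝕜) in
def EntrywiseDiffContOnCl {m n : Type*} (M : 𝕜 → Matrix m n 𝕜) (s : Set 𝕜) : Prop :=
  ∀ i j, DiffContOnCl 𝕜 (fun z => M z i j) s

namespace EntrywiseDiffContOnCl

variable {m n p : Type*}

theorem of_continuousOn {M : 𝕜 → Matrix m n 𝕜}
    (hd : ∀ i j, DifferentiableOn 𝕜 (fun z => M z i j) s) (hc : ContinuousOn M (closure s)) :
    EntrywiseDiffContOnCl 𝕜 M s := fun i j =>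
  ⟨hd i j, (continuous_apply j).comp_continuousOn ((continuous_apply i).comp_continuousOn hc)⟩

theorem const (A : Matrix m n 𝕜) : EntrywiseDiffContOnCl 𝕜 (fun _ : 𝕜 => A) s :=
  fun _ _ => diffContOnCl_const

theorem mul [Fintype n] {M : 𝕜 → Matrix m n 𝕜} {N : 𝕜 → Matrix n p 𝕜}
    (hM : EntrywiseDiffContOnCl 𝕜 M s) (hN : EntrywiseDiffContOnCl 𝕜 N s) :
    EntrywiseDiffContOnCl 𝕜 (fun z => M z * N z) s := fun i j => by
  simpa only [Matrix.mul_apply] using DiffContOnCl.sum fun k _ => (hM i k).mul (hN k j)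

theorem det [Fintype n] [DecidableEq n] {M : 𝕜 → Matrix n n 𝕜}
    (hM : EntrywiseDiffContOnCl 𝕜 M s) : DiffContOnCl 𝕜 (fun z => (M z).det) s := by
  simpa only [Matrix.det_apply'] using
    DiffContOnCl.sum fun σ _ => diffContOnCl_const.mul (DiffContOnCl.prod fun i _ => hM (σ i) i)

theorem updateRow [DecidableEq n] {M : 𝕜 → Matrix n n 𝕜} (hM : EntrywiseDiffContOnCl 𝕜 M s)
    (j : n) (r : n → 𝕜) : EntrywiseDiffContOnCl 𝕜 (fun z => (M z).updateRow j r) s := by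
  intro k l
  by_cases hk : k = j
  · simpa only [hk, Matrix.updateRow_self] using diffContOnCl_const
  · simpa only [Matrix.updateRow_ne hk] using hM k l

theorem adjugate [Fintype n] [DecidableEq n] {M : 𝕜 → Matrix n n 𝕜}
    (hM : EntrywiseDiffContOnCl 𝕜 M s) :
    EntrywiseDiffContOnCl 𝕜 (fun z => (M z).adjugate) s := fun i j => by
  simpa only [Matrix.adjugate_apply] using (hM.updateRow j (Pi.single i 1)).det

theorem inv [Fintype n] [DecidableEq n] {M : 𝕜 → Matrix n n 𝕜}
    (hM : EntrywiseDiffContOnCl 𝕜 M s) (hU : ∀ z ∈ closure s, IsUnit (M z)) :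
    EntrywiseDiffContOnCl 𝕜 (fun z => (M z)⁻¹) s := by
  intro i j
  have hdet : ∀ z ∈ closure s, (M z).det ≠ 0 := fun z hz =>
    ((Matrix.isUnit_iff_isUnit_det _).mp (hU z hz)).ne_zero
  simpa only [Matrix.inv_def, Ring.inverse_eq_inv', Matrix.smul_apply, Pi.inv_apply,
    smul_eq_mul] using (hM.det.inv hdet).mul (hM.adjugate i j)

theorem map_conj_comp_conj {M : ℂ → Matrix m n ℂ} {U : Set ℂ}
    (hM : EntrywiseDiffContOnCl ℂ M U) (hUo : IsOpen U) (hU : MapsTo conj U U) :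
    EntrywiseDiffContOnCl ℂ (fun z => (M (conj z)).map conj) U :=
  fun i j => (hM i j).conj_conj hUo hU

end EntrywiseDiffContOnCl

end

theorem Matrix.mul_inv_eq_inv_mul_iff {n α : Type*} [Fintype n] [DecidableEq n] [CommRing α]
    {A₁ A₂ B₁ B₂ : Matrix n n α} (hA₂ : IsUnit A₂) (hB₁ : IsUnit B₁) :
    B₂ * B₁⁻¹ = A₂⁻¹ * A₁ ↔ A₁ * B₁ = A₂ * B₂ := by
  rw [Matrix.isUnit_iff_isUnit_det] at hA₂ hB₁
  constructor
  · intro h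
    rw [← Matrix.mul_nonsing_inv_cancel_left A₂ A₁ hA₂, ← h, Matrix.mul_assoc,
      Matrix.nonsing_inv_mul_cancel_right B₁ B₂ hB₁]
  · intro h
    rw [← Matrix.nonsing_inv_mul_cancel_left A₂ (B₂ * B₁⁻¹) hA₂, ← Matrix.mul_assoc A₂, ← h,
      Matrix.mul_nonsing_inv_cancel_right B₁ A₁ hB₁]

/-- Uniqueness of canonical factorizations `M (z̄) * P z` on the circle. -/
theorem mul_eq_mul_of_eq_on_sphere {n : Type*} [Fintype n] [DecidableEq n]
    {M₁ M₂ P₁ P₂ : ℂ → Matrix n n ℂ}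
    (hM₁ : EntrywiseDiffContOnCl ℂ M₁ (ball 0 1)) (hM₂ : EntrywiseDiffContOnCl ℂ M₂ (ball 0 1))
    (hP₁ : EntrywiseDiffContOnCl ℂ P₁ (ball 0 1)) (hP₂ : EntrywiseDiffContOnCl ℂ P₂ (ball 0 1))
    (hM₂u : ∀ z ∈ closedBall (0 : ℂ) 1, IsUnit (M₂ z))
    (hP₁u : ∀ z ∈ closedBall (0 : ℂ) 1, IsUnit (P₁ z))
    (h : ∀ z ∈ sphere (0 : ℂ) 1, M₁ (conj z) * P₁ z = M₂ (conj z) * P₂ z)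
    {z w : ℂ} (hz : z ∈ closedBall (0 : ℂ) 1) (hw : w ∈ closedBall (0 : ℂ) 1) :
    M₁ w * P₁ z = M₂ w * P₂ z := by
  have hcl : closure (ball (0 : ℂ) 1) = closedBall 0 1 := closure_ball 0 one_ne_zero
  refine (Matrix.mul_inv_eq_inv_mul_iff (hM₂u w hw) (hP₁u z hz)).mp ?_
  ext i j
  refine eq_of_eq_comp_conj_on_sphere (hP₂.mul (hP₁.inv (hcl ▸ hP₁u)) i j)
    ((hM₂.inv (hcl ▸ hM₂u)).mul hM₁ i j) (fun ζ hζ => ?_) hz hw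
  have hζ' : ζ ∈ closedBall (0 : ℂ) 1 := sphere_subset_closedBall hζ
  exact congr_fun₂ ((Matrix.mul_inv_eq_inv_mul_iff (hM₂u _ (by simpa using hζ'))
    (hP₁u ζ hζ')).mpr (h ζ hζ)) i j

/-- `Ad_𝒞` for the antiunitary `𝒞 v = U v̄`. -/
def antiunitaryAd {n : Type*} [Fintype n] [DecidableEq n] (U : unitary (Matrix n n ℂ)) :
    Matrix n n ℂ →* Matrix n n ℂ where
  toFun A := U * A.map conj * star (U : Matrix n n ℂ)
  map_one' := by simp
  map_mul' A B := by
    have hU : star (U : Matrix n n ℂ) * U = 1 := Unitary.star_mul_self_of_mem U.2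
    simp only [Matrix.map_mul, Matrix.mul_assoc]
    rw [← Matrix.mul_assoc (star _) _ (B.map conj * _), hU, Matrix.one_mul]

theorem EntrywiseDiffContOnCl.antiunitaryAd_comp_conj {n : Type*} [Fintype n] [DecidableEq n]
    (U : unitary (Matrix n n ℂ)) {M : ℂ → Matrix n n ℂ} {s : Set ℂ}
    (hM : EntrywiseDiffContOnCl ℂ M s) (hs : IsOpen s) (hconj : MapsTo conj s s) :
    EntrywiseDiffContOnCl ℂ (fun z => antiunitaryAd U (M (conj z))) s :=
  ((const _).mul (hM.map_conj_comp_conj hs hconj)).mul (const _)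

namespace CanonicalFactorization

variable {n : ℕ} {f : ℂ → Matrix (Fin n) (Fin n) ℂ} (c : CanonicalFactorization n f)

theorem entrywiseDiffContOnCl_Fm : EntrywiseDiffContOnCl ℂ c.Fm (ball 0 1) :=
  .of_continuousOn c.anal_m (by rw [closure_ball 0 one_ne_zero]; exact c.contOn_m)

theorem entrywiseDiffContOnCl_Fp : EntrywiseDiffContOnCl ℂ c.Fp (ball 0 1) :=
  .of_continuousOn c.anal_p (by rw [closure_ball 0 one_ne_zero]; exact c.contOn_p)

theorem factor_conj {z : ℂ} (hz : z ∈ sphere (0 : ℂ) 1) : f z = c.Fm (conj z) * c.Fp z := by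
  rw [c.factor z hz, RCLike.inv_eq_conj (by simpa using hz)]

end CanonicalFactorization

open Matrix in
/-- Here `𝒞 v = C v̄` with `C` unitary, so `Ad_𝒞 x = C x̄ C*`, and `fᵉ(z) = Fm z̄ * Fp z`. -/
theorem extension_real_equivariant_general {n : ℕ} (f : ℂ → Matrix (Fin n) (Fin n) ℂ)
    (c : CanonicalFactorization n f)
    (C : Matrix (Fin n) (Fin n) ℂ) (hC : Cᴴ * C = 1 ∧ C * Cᴴ = 1)
    (hf : ∀ z ∈ sphere (0 : ℂ) 1,
      f z = C * (f (starRingEnd ℂ z)).map (starRingEnd ℂ) * Cᴴ) :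
    ∀ z ∈ closedBall (0 : ℂ) 1,
      c.Fm (starRingEnd ℂ z) * c.Fp z =
        C * ((c.Fm z * c.Fp (starRingEnd ℂ z)).map (starRingEnd ℂ)) * Cᴴ := by
  intro z hz
  set Φ := antiunitaryAd ⟨C, hC⟩
  have hconj := mapsTo_conj_ball_zero 1
  have hsphere : ∀ ζ ∈ sphere (0 : ℂ) 1,
      c.Fm (conj ζ) * c.Fp ζ = Φ (c.Fm (conj (conj ζ))) * Φ (c.Fp (conj ζ)) := fun ζ hζ => by
    rw [← c.factor_conj hζ, ← map_mul, ← c.factor_conj (by simpa using hζ)]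
    exact hf ζ hζ
  have hext := mul_eq_mul_of_eq_on_sphere c.entrywiseDiffContOnCl_Fm
    (c.entrywiseDiffContOnCl_Fm.antiunitaryAd_comp_conj _ isOpen_ball hconj)
    c.entrywiseDiffContOnCl_Fp
    (c.entrywiseDiffContOnCl_Fp.antiunitaryAd_comp_conj _ isOpen_ball hconj)
    (fun w hw => (c.unit_m _ (by simpa using hw)).map Φ) c.unit_p hsphere hz
    (by simpa using hz : conj z ∈ closedBall (0 : ℂ) 1)
  rw [hext, Complex.conj_conj, ← map_mul]
  rfl

open Matrix in
/-- Let `𝒞` be an antiunitary operator on `ℂⁿ` with `𝒞² = ±1`; we write it as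
`𝒞 v = C (conj v)` with `C` a unitary matrix, so that `Ad_𝒞 x = C (x̄) C*` (entrywise
conjugate) and `𝒞² = ±1` reads `C C̄ = ±1`.  If `f : 𝕋 → GLₙ(ℂ)` satisfies
`f(z) = 𝒞 f(z̄) 𝒞*` and admits a canonical factorization, then its canonical extension
`fᵉ(z) = f₋ᵉ(z̄⁻¹) f₊ᵉ(z)` satisfies `fᵉ(z) = 𝒞 fᵉ(z̄) 𝒞*` on the closed unit disk.
(Note `fᵉ(z̄) = Fm z * Fp (conj z)`.) -/
theorem extension_real_equivariant {n : ℕ} (f : ℂ → Matrix (Fin n) (Fin n) ℂ)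
    (c : CanonicalFactorization n f)
    (C : Matrix (Fin n) (Fin n) ℂ) (hC : Cᴴ * C = 1 ∧ C * Cᴴ = 1)
    (ε : ℂ) (hε : ε = 1 ∨ ε = -1)
    (hC2 : C * C.map (starRingEnd ℂ) = ε • (1 : Matrix (Fin n) (Fin n) ℂ))
    (hf : ∀ z ∈ sphere (0 : ℂ) 1,
      f z = C * (f (starRingEnd ℂ z)).map (starRingEnd ℂ) * Cᴴ) :
    ∀ z ∈ closedBall (0 : ℂ) 1,
      c.Fm (starRingEnd ℂ z) * c.Fp z =
        C * ((c.Fm z * c.Fp (starRingEnd ℂ z)).map (starRingEnd ℂ)) * Cᴴ :=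
  extension_real_equivariant_general f c C hC hf
end
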